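/- A graph is an interval graph if and only if it has a clique path, i.e., a clique tree that is a path. -/

import Mathlib

open SimpleGraph

variable {V : Type*}

/-- A graph is chordal if it contains no induced cycle of length at least four. -/
def IsChordal (G : SimpleGraph V) : Prop :=
  ∀ n : ℕ, 4 ≤ n → IsEmpty (SimpleGraph.cycleGraph n ↪g G)

/-- `S` separates `u` from `v`: every walk from `u` to `v` meets `S`, and `u, v ∉ S`. -/
def IsSeparator (G : SimpleGraph V) (u v : V) (S : Set V) : Prop :=
  u ∉ S ∧ v ∉ S ∧ ∀ p : G.Walk u v, ∃ x ∈ p.support, x ∈ S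

/-- A `{u,v}`-separator: a separator of `u,v` minimal with this property. -/
def IsMinUVSeparator (G : SimpleGraph V) (u v : V) (S : Set V) : Prop :=
  IsSeparator G u v S ∧ ∀ T, T ⊂ S → ¬ IsSeparator G u v T

/-- A minimal separator: a `{u,v}`-separator for some non-adjacent pair `u ≠ v`. -/
def IsMinimalSeparator (G : SimpleGraph V) (S : Set V) : Prop :=
  ∃ u v, u ≠ v ∧ ¬ G.Adj u v ∧ IsMinUVSeparator G u v S

/-- A maximal clique. -/
def IsMaxClique (G : SimpleGraph V) (Q : Set V) : Prop :=
  G.IsClique Q ∧ ∀ R, G.IsClique R → Q ⊆ R → Q = R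

abbrev MaxClique (G : SimpleGraph V) := {Q : Set V // IsMaxClique G Q}

/-- A clique tree of `G`: a tree on the maximal cliques of `G` such that for every
vertex `v` the maximal cliques containing `v` induce a (nonempty connected) subtree. -/
structure CliqueTree (G : SimpleGraph V) where
  tree : SimpleGraph (MaxClique G)
  isTree : tree.IsTree
  subtree : ∀ v : V, ((tree.induce {Q : MaxClique G | v ∈ Q.1})).Connected

/-- An asteroidal triple: three pairwise non-adjacent vertices such that any two are
joined by a path avoiding the closed neighborhood of the third. -/
def IsAsteroidalTriple (G : SimpleGraph V) (a b c : V) : Prop :=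
  a ≠ b ∧ b ≠ c ∧ a ≠ c ∧ ¬ G.Adj a b ∧ ¬ G.Adj b c ∧ ¬ G.Adj a c ∧
  (∃ p : G.Walk a b, ∀ x ∈ p.support, x ≠ c ∧ ¬ G.Adj c x) ∧
  (∃ p : G.Walk b c, ∀ x ∈ p.support, x ≠ a ∧ ¬ G.Adj a x) ∧
  (∃ p : G.Walk a c, ∀ x ∈ p.support, x ≠ b ∧ ¬ G.Adj b x)
/-- `Q` is a leaf of the subtree induced on `W`: it lies in `W` and has exactly one
neighbor in `W`. -/
def IsLeafIn (T : SimpleGraph α) (W : Set α) (Q : α) : Prop :=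
  Q ∈ W ∧ ∃! R, R ∈ W ∧ T.Adj Q R

/-- `W` is a connected set of cliques of the clique tree `T` meeting each of the
subtrees `T^{z1}, T^{z2}, T^{z3}`. -/
def IsConnector3 (G : SimpleGraph V) (T : CliqueTree G) (z1 z2 z3 : V)
    (W : Set (MaxClique G)) : Prop :=
  (T.tree.induce W).Connected ∧
    (∃ Q ∈ W, z1 ∈ Q.1) ∧ (∃ Q ∈ W, z2 ∈ Q.1) ∧ (∃ Q ∈ W, z3 ∈ Q.1)

/-- `W` is a connected set of cliques of the clique tree `T` meeting each of the
subtrees `T^{z1}, T^{z2}, T^{z3}, T^{z4}`. -/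
def IsConnector4 (G : SimpleGraph V) (T : CliqueTree G) (z1 z2 z3 z4 : V)
    (W : Set (MaxClique G)) : Prop :=
  (T.tree.induce W).Connected ∧
    (∃ Q ∈ W, z1 ∈ Q.1) ∧ (∃ Q ∈ W, z2 ∈ Q.1) ∧ (∃ Q ∈ W, z3 ∈ Q.1) ∧ (∃ Q ∈ W, z4 ∈ Q.1)

/-- An interval graph: the intersection graph of a family of (nonempty) closed
intervals of the real line. -/
def IsIntervalGraph (G : SimpleGraph V) : Prop :=
  ∃ a b : V → ℝ, (∀ v, a v ≤ b v) ∧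
    ∀ u v : V, G.Adj u v ↔ u ≠ v ∧ (Set.Icc (a u) (b u) ∩ Set.Icc (a v) (b v)).Nonempty

/-- The underlying tree of `T` is a path: every vertex has at most two neighbors. -/
def CliqueTree.IsCliquePath (G : SimpleGraph V) (T : CliqueTree G) : Prop :=
  ∀ Q a b c : MaxClique G, T.tree.Adj Q a → T.tree.Adj Q b → T.tree.Adj Q c →
    a = b ∨ a = c ∨ b = c


/-!
An interval model gives a clique path: every maximal clique `Q` contains the point
`sSup (a '' Q)` of all its intervals (Helly), and a vertex belongs to exactly those maximal
cliques whose point lies in its interval, so ordering the maximal cliques by these points puts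
the cliques containing any vertex next to each other. Conversely, in a clique path the distance
to an end clique is an injective labelling in which the cliques containing a vertex `v` form an
integer interval; these intervals are an interval model, since two vertices are adjacent iff some
maximal clique contains both.
-/

theorem Set.nonempty_Icc_inter_Icc_natCast {i j k l : ℕ} :
    (Set.Icc (i : ℝ) j ∩ Set.Icc (k : ℝ) l).Nonempty ↔ (Set.Icc i j ∩ Set.Icc k l).Nonempty := by
  simp only [Set.Icc_inter_Icc, Set.nonempty_Icc]
  norm_cast

theorem exists_equiv_fin_monotone {β γ : Type*} [Finite β] [LinearOrder γ] (p : β → γ) :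
    ∃ e : β ≃ Fin (Nat.card β), ∀ x y, e x ≤ e y → p x ≤ p y := by
  let g := Finite.equivFin β
  refine ⟨g.trans (Tuple.sort (p ∘ g.symm)).symm, fun x y h ↦ ?_⟩
  simpa using Tuple.monotone_sort (p ∘ g.symm) h

namespace SimpleGraph

variable {α : Type*} {G : SimpleGraph α}

theorem Walk.exists_mem_support_eq {f : α → ℕ} (hf : ∀ x y, G.Adj x y → f y ≤ f x + 1)
    {u w : α} (p : G.Walk u w) {k : ℕ} (hu : f u ≤ k) (hw : k ≤ f w) :
    ∃ x ∈ p.support, f x = k := by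
  induction p with
  | nil => exact ⟨_, List.mem_singleton_self _, le_antisymm hu hw⟩
  | cons h q ih =>
    rcases hu.eq_or_lt with hu | hu
    · exact ⟨_, List.mem_cons_self .., hu⟩
    · obtain ⟨x, hx, hxk⟩ := ih (by have := hf _ _ h; omega) hw
      exact ⟨x, List.mem_cons_of_mem _ hx, hxk⟩

theorem ordConnected_image_of_induce_preconnected {f : α → ℕ}
    (hf : ∀ x y, G.Adj x y → f y ≤ f x + 1) {s : Set α} (hs : (G.induce s).Preconnected) :
    (f '' s).OrdConnected := by
  refine ⟨?_⟩
  rintro _ ⟨x, hx, rfl⟩ _ ⟨z, hz, rfl⟩ k ⟨hxk, hkz⟩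
  obtain ⟨p⟩ := hs ⟨x, hx⟩ ⟨z, hz⟩
  obtain ⟨y, -, rfl⟩ := p.exists_mem_support_eq (f := f ∘ Subtype.val) (fun _ _ h ↦ hf _ _ h)
    hxk hkz
  exact ⟨y, y.2, rfl⟩

theorem Connected.exists_adj_dist_eq (hG : G.Connected) (r : α) {x : α} {d : ℕ}
    (hx : G.dist r x = d + 1) : ∃ y, G.Adj y x ∧ G.dist r y = d := by
  obtain ⟨p, hp⟩ := hG.exists_walk_length_eq_dist x r
  rw [dist_comm] at hp
  have hnil : ¬ p.Nil := Walk.not_nil_iff_lt_length.2 (by omega)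
  have hsnd := p.adj_snd hnil
  refine ⟨p.snd, hsnd.symm, le_antisymm ?_ ?_⟩
  · have hlen := p.length_tail_add_one hnil
    have hdist := dist_le p.tail
    rw [dist_comm]
    omega
  · rcases hsnd.diff_dist_adj (u := r) with h | h | h <;> omega

theorem Connected.dist_injective (hG : G.Connected) {r : α} (hr : (G.neighborSet r).Subsingleton)
    (hdeg : ∀ x a b c, G.Adj x a → G.Adj x b → G.Adj x c → a = b ∨ a = c ∨ b = c) :
    Function.Injective (G.dist r) := by
  suffices ∀ d x y, G.dist r x = d → G.dist r y = d → x = y from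
    fun x y h ↦ this _ x y rfl h.symm
  intro d
  induction d with
  | zero =>
    intro x y hx hy
    rw [hG.dist_eq_zero_iff] at hx hy
    exact hx.symm.trans hy
  | succ d ih =>
    intro x y hx hy
    obtain ⟨z, hzx, hz⟩ := hG.exists_adj_dist_eq r hx
    obtain ⟨z', hzy, hz'⟩ := hG.exists_adj_dist_eq r hy
    obtain rfl : z = z' := ih z z' hz hz'
    cases d with
    | zero =>
      obtain rfl : r = z := hG.dist_eq_zero_iff.1 hz
      exact hr hzx hzy
    | succ d =>
      obtain ⟨w, hwz, hw⟩ := hG.exists_adj_dist_eq r hz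
      rcases hdeg z w x y hwz.symm hzx hzy with rfl | rfl | h
      · omega
      · omega
      · exact h

theorem IsTree.exists_neighborSet_subsingleton [Finite α] (hG : G.IsTree) :
    ∃ r, (G.neighborSet r).Subsingleton := by
  cases subsingleton_or_nontrivial α
  · exact ⟨hG.connected.nonempty.some, fun a _ b _ ↦ Subsingleton.elim a b⟩
  · classical
    have := Fintype.ofFinite α
    obtain ⟨r, hr⟩ := hG.exists_vert_degree_one_of_nontrivial
    obtain ⟨a, -, ha⟩ := degree_eq_one_iff_existsUnique_adj.1 hr
    exact ⟨r, fun x hx y hy ↦ (ha x hx).trans (ha y hy).symm⟩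

theorem pathGraph_eq_or_eq_or_eq_of_adj {n : ℕ} {i j k l : Fin n} (hj : (pathGraph n).Adj i j)
    (hk : (pathGraph n).Adj i k) (hl : (pathGraph n).Adj i l) : j = k ∨ j = l ∨ k = l := by
  simp only [pathGraph_adj, Fin.ext_iff] at *
  omega

theorem pathGraph_walk_mem_edges {n : ℕ} {u w : Fin n} (p : (pathGraph n).Walk u w)
    {m m' : Fin n} (hm : (m : ℕ) + 1 = m') (hu : u ≤ m) (hw : m' ≤ w) : s(m, m') ∈ p.edges := by
  induction p with
  | nil => exact absurd (hu.trans_lt (Fin.lt_def.2 (by omega))) hw.not_gt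
  | @cons u v w h q ih =>
    by_cases hv : v ≤ m
    · exact List.mem_cons_of_mem _ (ih hv hw)
    · rw [pathGraph_adj] at h
      have hum : u = m := Fin.ext (by rw [Fin.le_def] at hu hv; omega)
      have hvm : v = m' := Fin.ext (by rw [Fin.le_def] at hu hv; omega)
      subst hum hvm
      exact List.mem_cons_self ..

theorem pathGraph_isAcyclic (n : ℕ) : (pathGraph n).IsAcyclic := by
  refine isAcyclic_iff_forall_adj_isBridge.2 fun u v h ↦
    isBridge_iff_forall_walk_mem_edges.2 fun p ↦ ?_
  rcases pathGraph_adj.1 h with h | h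
  · exact pathGraph_walk_mem_edges p h le_rfl le_rfl
  · simpa [Sym2.eq_swap] using pathGraph_walk_mem_edges p.reverse h le_rfl le_rfl

theorem pathGraph_isTree {n : ℕ} (hn : 0 < n) : (pathGraph n).IsTree :=
  have := Fin.pos_iff_nonempty.1 hn
  ⟨⟨pathGraph_preconnected n⟩, pathGraph_isAcyclic n⟩

theorem pathGraph_induce_connected {n : ℕ} {s : Set (Fin n)} (hs : s.OrdConnected)
    (hne : s.Nonempty) : ((pathGraph n).induce s).Connected := by
  have := hne.to_subtype
  suffices h : ∀ (k : ℕ) (i j : s), (i : ℕ) + k = j → ((pathGraph n).induce s).Reachable i j by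
    refine ⟨fun i j ↦ ?_⟩
    rcases le_total (i : ℕ) j with hij | hij
    · exact h _ i j (Nat.add_sub_cancel' hij)
    · exact (h _ j i (Nat.add_sub_cancel' hij)).symm
  intro k
  induction k with
  | zero => exact fun i j h ↦ (Subtype.ext (Fin.ext h)).rec .rfl
  | succ k ih =>
    intro i j h
    have hi' : (⟨i + 1, by have := j.1.2; omega⟩ : Fin n) ∈ s :=
      hs.out i.2 j.2 ⟨Fin.le_def.2 (Nat.le_succ _), Fin.le_def.2 (show (i : ℕ) + 1 ≤ j by omega)⟩
    refine Adj.reachable ?_ |>.trans (ih ⟨_, hi'⟩ j (by simp; omega))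
    simp [pathGraph_adj]

end SimpleGraph

section MaxClique

variable {G : SimpleGraph V} [Finite V]

theorem exists_isMaxClique_superset {s : Set V} (hs : G.IsClique s) :
    ∃ Q, IsMaxClique G Q ∧ s ⊆ Q := by
  obtain ⟨Q, hsQ, hQ⟩ := Finite.exists_le_maximal hs
  exact ⟨Q, ⟨hQ.prop, fun R hR hQR ↦ hQR.antisymm (hQ.2 hR hQR)⟩, hsQ⟩

theorem exists_maxClique_mem (v : V) : ∃ Q : MaxClique G, v ∈ Q.1 := by
  obtain ⟨Q, hQ, hvQ⟩ := exists_isMaxClique_superset (G.isClique_singleton v)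
  exact ⟨⟨Q, hQ⟩, hvQ rfl⟩

theorem adj_iff_exists_maxClique {u v : V} :
    G.Adj u v ↔ u ≠ v ∧ ∃ Q : MaxClique G, u ∈ Q.1 ∧ v ∈ Q.1 := by
  refine ⟨fun h ↦ ⟨h.ne, ?_⟩, fun ⟨hne, Q, hu, hv⟩ ↦ Q.2.1 hu hv hne⟩
  obtain ⟨Q, hQ, huv⟩ := exists_isMaxClique_superset (isClique_pair.2 fun _ ↦ h)
  exact ⟨⟨Q, hQ⟩, huv (Set.mem_insert u _), huv (Set.mem_insert_of_mem u rfl)⟩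

end MaxClique

section IntervalModel

variable {G : SimpleGraph V} {a b : V → ℝ}

theorem sSup_image_le_of_isClique (hab : ∀ v, a v ≤ b v)
    (hadj : ∀ u v, G.Adj u v ↔ u ≠ v ∧ (Set.Icc (a u) (b u) ∩ Set.Icc (a v) (b v)).Nonempty)
    {Q : Set V} (hQ : G.IsClique Q) {v : V} (hv : v ∈ Q) : sSup (a '' Q) ≤ b v := by
  refine csSup_le ⟨a v, Set.mem_image_of_mem a hv⟩ ?_
  rintro _ ⟨u, hu, rfl⟩
  obtain rfl | huv := eq_or_ne u v
  · exact hab u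
  · obtain ⟨t, ht⟩ := ((hadj u v).1 (hQ hu hv huv)).2
    exact ht.1.1.trans ht.2.2

theorem mem_of_sSup_image_le_of_le [Finite V] (hab : ∀ v, a v ≤ b v)
    (hadj : ∀ u v, G.Adj u v ↔ u ≠ v ∧ (Set.Icc (a u) (b u) ∩ Set.Icc (a v) (b v)).Nonempty)
    {Q R S : MaxClique G} (hQR : sSup (a '' Q.1) ≤ sSup (a '' R.1))
    (hRS : sSup (a '' R.1) ≤ sSup (a '' S.1)) {v : V} (hQ : v ∈ Q.1) (hS : v ∈ S.1) :
    v ∈ R.1 := by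
  have hle {u : V} {P : Set V} (hu : u ∈ P) : a u ≤ sSup (a '' P) :=
    le_csSup (P.toFinite.image a).bddAbove (Set.mem_image_of_mem a hu)
  have hclique : G.IsClique (insert v R.1) := R.2.1.insert fun u hu hvu ↦ (hadj v u).2
    ⟨hvu, sSup (a '' R.1),
      ⟨(hle hQ).trans hQR, hRS.trans (sSup_image_le_of_isClique hab hadj S.2.1 hS)⟩,
      ⟨hle hu, sSup_image_le_of_isClique hab hadj R.2.1 hu⟩⟩
  rw [R.2.2 _ hclique (Set.subset_insert v R.1)]
  exact Set.mem_insert v R.1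

end IntervalModel

section

variable {G : SimpleGraph V} [Finite V]

theorem IsIntervalGraph.exists_cliquePath (hG : IsIntervalGraph G) :
    ∃ T : CliqueTree G, CliqueTree.IsCliquePath G T := by
  obtain ⟨a, b, hab, hadj⟩ := hG
  obtain ⟨e, he⟩ := exists_equiv_fin_monotone fun Q : MaxClique G ↦ sSup (a '' Q.1)
  have hcons (v : V) : (e '' {Q | v ∈ Q.1}).OrdConnected := by
    refine ⟨?_⟩
    rintro _ ⟨Q, hQ, rfl⟩ _ ⟨S, hS, rfl⟩ i ⟨hQi, hiS⟩
    refine ⟨e.symm i, ?_, e.apply_symm_apply i⟩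
    exact mem_of_sSup_image_le_of_le hab hadj (he _ _ (by simpa using hQi))
      (he _ _ (by simpa using hiS)) hQ hS
  have hn : 0 < Nat.card (MaxClique G) := by
    obtain ⟨Q, hQ, -⟩ := exists_isMaxClique_superset G.isClique_empty
    have : Nonempty (MaxClique G) := ⟨⟨Q, hQ⟩⟩
    exact Nat.card_pos
  refine ⟨⟨(pathGraph _).comap e, (Iso.comap e _).isTree_iff.2 (pathGraph_isTree hn), fun v ↦ ?_⟩,
    fun Q x y z hx hy hz ↦ ?_⟩
  · obtain ⟨Q, hQ⟩ := exists_maxClique_mem (G := G) v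
    exact ((Iso.comap e _).induce e.injective.injOn.bijOn_image).connected_iff.2
      (pathGraph_induce_connected (hcons v) ⟨e Q, Q, hQ, rfl⟩)
  · simpa only [e.injective.eq_iff] using pathGraph_eq_or_eq_or_eq_of_adj hx hy hz

theorem isIntervalGraph_of_injective_of_ordConnected (f : MaxClique G → ℕ)
    (hf : Function.Injective f) (hcons : ∀ v, (f '' {Q | v ∈ Q.1}).OrdConnected) :
    IsIntervalGraph G := by
  set I : V → Set ℕ := fun v ↦ f '' {Q | v ∈ Q.1}
  have hne (v : V) : (I v).Nonempty :=
    let ⟨Q, hQ⟩ := exists_maxClique_mem v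
    ⟨f Q, Q, hQ, rfl⟩
  have hI (v : V) : I v = Set.Icc (sInf (I v)) (sSup (I v)) :=
    ((hne v).ordConnected_iff_of_bdd (OrderBot.bddBelow _) (Set.toFinite _).bddAbove).1 (hcons v)
  refine ⟨fun v ↦ (sInf (I v) : ℕ), fun v ↦ (sSup (I v) : ℕ), fun v ↦ ?_, fun u v ↦ ?_⟩
  · exact Nat.cast_le.2 <| csInf_le_csSup (hne v) (OrderBot.bddBelow _) (Set.toFinite _).bddAbove
  · rw [adj_iff_exists_maxClique, Set.nonempty_Icc_inter_Icc_natCast, ← hI u, ← hI v]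
    refine and_congr_right fun _ ↦ ⟨fun ⟨Q, hu, hv⟩ ↦ ⟨f Q, ⟨Q, hu, rfl⟩, ⟨Q, hv, rfl⟩⟩, ?_⟩
    rintro ⟨_, ⟨Q, hu, rfl⟩, ⟨R, hv, hRQ⟩⟩
    exact ⟨Q, hu, hf hRQ ▸ hv⟩

theorem CliqueTree.IsCliquePath.isIntervalGraph {T : CliqueTree G}
    (hT : CliqueTree.IsCliquePath G T) : IsIntervalGraph G := by
  obtain ⟨r, hr⟩ := T.isTree.exists_neighborSet_subsingleton
  refine isIntervalGraph_of_injective_of_ordConnected _ (T.isTree.connected.dist_injective hr hT)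
    fun v ↦ ordConnected_image_of_induce_preconnected (fun x y h ↦ ?_) (T.subtree v).preconnected
  rcases h.diff_dist_adj (u := r) with h | h | h <;> omega

end

theorem intervalGraph_iff_cliquePath_general [Fintype V] (G : SimpleGraph V) :
    IsIntervalGraph G ↔ ∃ T : CliqueTree G, CliqueTree.IsCliquePath G T :=
  ⟨IsIntervalGraph.exists_cliquePath, fun ⟨_, hT⟩ ↦ hT.isIntervalGraph⟩

/-- A graph is an interval graph if and only if it has a clique path, i.e. a clique
tree whose underlying tree is a path. -/
theorem intervalGraph_iff_cliquePath [Fintype V] [Nonempty V] (G : SimpleGraph V) :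
    IsIntervalGraph G ↔ ∃ T : CliqueTree G, CliqueTree.IsCliquePath G T :=
  intervalGraph_iff_cliquePath_general G
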